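/- arXiv:2605.00158 — 2 statements merged into one kernel-verified Lean document; each statement's English description precedes it below -/
import Mathlib

section
/- Let M₀, M₁ ∈ ℝ^m and S₀, S₁ ∈ ℝ^{m×m} positive definite, let f₀, f₁ be the densities of N(M₀,S₀) and N(M₁,S₁), and define LLR(y) = log f₁(y) − log f₀(y). Set D = M₁ − M₀, Φ₀ = S₀^{1/2}·S₁^{−1}·S₀^{1/2} with orthogonal eigendecomposition Φ₀ = Ψ₀·Λ·Ψ₀ᵀ (Λ diagonal with entries λ_j), weights w_j = (1 − λ_j)/2, b₀ = Ψ₀ᵀ·S₀^{1/2}·S₁^{−1}·D, K₀ = {j : w_j ≠ 0}, ν_j = b_{0,j}/(2w_j) for j ∈ K₀, σ₀² = Σ_{j ∉ K₀} b_{0,j}², and C₀ = (log(det S₀/det S₁) − Dᵀ·S₁^{−1}·D)/2 − Σ_{j ∈ K₀} w_j·ν_j². Then if Y ~ N(M₀, S₀), the random variable LLR(Y) has the same distribution as Σ_{j ∈ K₀} w_j·(Z_j + ν_j)² + σ₀·Z' + C₀, where Z' and the Z_j, j ∈ K₀, are independent standard normal random variables. -/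
/-!
With `A = S₀^{1/2} Ψ₀` we have `A Aᵀ = S₀`, so `Y = A Z + M₀` with `Z` standard normal
on `ℝ^m`; moreover `Aᵀ S₀⁻¹ A = 1` and `Aᵀ S₁⁻¹ A = Λ`, so in the coordinates `Z` the
log-likelihood ratio is `C + Σ_j (w_j Z_j² + b_{0,j} Z_j)`. Completing the square on `K₀` turns
this into `Σ_{j ∈ K₀} w_j (Z_j + ν_j)² + Σ_{j ∉ K₀} b_{0,j} Z_j + C₀`. The two sums depend on
disjoint blocks of independent coordinates, and the second one is centred Gaussian with
variance `σ₀²`, so it may be replaced by `σ₀ Z'` with `Z'` independent of `Z`.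
-/

open Matrix MeasureTheory ProbabilityTheory

noncomputable section

/-- Density of the multivariate Gaussian `N(M, S)` (for `S` positive definite) with
respect to Lebesgue measure. -/
def gaussDensity {m : ℕ} (M : Fin m → ℝ) (S : Matrix (Fin m) (Fin m) ℝ)
    (y : Fin m → ℝ) : ℝ :=
  (2 * Real.pi) ^ (-(m : ℝ) / 2) * S.det ^ (-(1 : ℝ) / 2) *
    Real.exp (-((y - M) ⬝ᵥ S⁻¹.mulVec (y - M)) / 2)

/-- The nondegenerate multivariate Gaussian measure `N(M, S)` on `ℝ^m`. -/
def gaussMeasure {m : ℕ} (M : Fin m → ℝ) (S : Matrix (Fin m) (Fin m) ℝ) :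
    Measure (Fin m → ℝ) :=
  volume.withDensity fun y => ENNReal.ofReal (gaussDensity M S y)

open Real

namespace MeasureTheory

theorem lintegral_fin_nat_prod_eq_prod {n : ℕ} {E : Type*} [MeasurableSpace E]
    {μ : Fin n → Measure E} [∀ i, SigmaFinite (μ i)] {f : Fin n → E → ENNReal}
    (hf : ∀ i, Measurable (f i)) :
    ∫⁻ x, ∏ i, f i (x i) ∂Measure.pi μ = ∏ i, ∫⁻ x, f i x ∂μ i := by
  induction n with
  | zero => simp
  | succ n ih =>
    calc ∫⁻ x, ∏ i, f i (x i) ∂Measure.pi μ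
        = ∫⁻ x : E × (Fin n → E), f 0 x.1 * ∏ i : Fin n, f i.succ (x.2 i)
            ∂(μ 0).prod (Measure.pi fun i ↦ μ i.succ) := by
          rw [← (measurePreserving_piFinSuccAbove μ 0).symm.lintegral_comp (by fun_prop)]
          simp_rw [MeasurableEquiv.piFinSuccAbove_symm_apply, Fin.insertNthEquiv,
            Fin.prod_univ_succ, Fin.insertNth_zero, Equiv.coe_fn_mk, Fin.cons_succ,
            Fin.zero_succAbove, cast_eq, Fin.cons_zero]
      _ = ∏ i, ∫⁻ x, f i x ∂μ i := by
          rw [lintegral_prod_mul (μ := μ 0) (ν := Measure.pi fun i ↦ μ i.succ) (f := f 0)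
            (g := fun y ↦ ∏ i : Fin n, f i.succ (y i)) (hf 0).aemeasurable
            (Finset.measurable_prod _ fun i _ ↦
              (hf i.succ).comp (measurable_pi_apply i)).aemeasurable,
            ih fun i ↦ hf i.succ, Fin.prod_univ_succ]

theorem lintegral_fintype_prod_eq_prod {ι : Type*} [Fintype ι] {E : Type*} [MeasurableSpace E]
    {μ : ι → Measure E} [∀ i, SigmaFinite (μ i)] {f : ι → E → ENNReal}
    (hf : ∀ i, Measurable (f i)) :
    ∫⁻ x, ∏ i, f i (x i) ∂Measure.pi μ = ∏ i, ∫⁻ x, f i x ∂μ i := by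
  let e := (Fintype.equivFin ι).symm
  rw [← (measurePreserving_piCongrLeft _ e).lintegral_comp (by fun_prop)]
  simp_rw [← e.prod_comp, MeasurableEquiv.coe_piCongrLeft, Equiv.piCongrLeft_apply_apply]
  exact lintegral_fin_nat_prod_eq_prod fun i ↦ hf (e i)

theorem Measure.pi_eq_withDensity {ι : Type*} [Fintype ι] {E : Type*} [MeasurableSpace E]
    {μ ν : ι → Measure E} [∀ i, SigmaFinite (μ i)] [∀ i, SigmaFinite (ν i)]
    {f : ι → E → ENNReal} (hf : ∀ i, Measurable (f i))
    (hν : ∀ i, ν i = (μ i).withDensity (f i)) :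
    Measure.pi ν = (Measure.pi μ).withDensity fun x ↦ ∏ i, f i (x i) := by
  refine Measure.pi_eq fun s hs ↦ ?_
  rw [withDensity_apply _ (.univ_pi hs), Measure.restrict_pi_pi,
    lintegral_fintype_prod_eq_prod hf]
  simp_rw [hν, withDensity_apply _ (hs _)]

theorem map_withDensity_of_leftInverse {α β : Type*} [MeasurableSpace α] [MeasurableSpace β]
    {μ : Measure α} {T : α → β} {g : β → α} (hT : Measurable T) (hg : Measurable g)
    (hgT : Function.LeftInverse g T) {f : α → ENNReal} (hf : Measurable f) :
    (μ.withDensity f).map T = (μ.map T).withDensity (f ∘ g) := by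
  ext s hs
  rw [Measure.map_apply hT hs, withDensity_apply _ (hT hs), withDensity_apply _ hs,
    setLIntegral_map hs (hf.comp hg) hT]
  simp_rw [Function.comp_apply, hgT _]

theorem map_mulVec_add_volume {ι : Type*} [Fintype ι] [DecidableEq ι] {A : Matrix ι ι ℝ}
    (hA : A.det ≠ 0) (M : ι → ℝ) :
    (volume : Measure (ι → ℝ)).map (fun z ↦ A *ᵥ z + M) =
      ENNReal.ofReal |A.det|⁻¹ • volume := by
  rw [show (fun z ↦ A *ᵥ z + M) = (· + M) ∘ Matrix.toLin' A from rfl,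
    ← Measure.map_map (by fun_prop) (Matrix.toLin' A).continuous_of_finiteDimensional.measurable,
    Real.map_matrix_volume_pi_eq_smul_volume_pi hA, Measure.map_smul, map_add_right_eq_self,
    abs_inv]

end MeasureTheory

namespace Matrix

variable {n α : Type*} [Fintype n] [CommRing α]

theorem mulVec_dotProduct_mulVec (A Q : Matrix n n α) (x y : n → α) :
    A *ᵥ x ⬝ᵥ Q *ᵥ y = x ⬝ᵥ (Aᵀ * Q) *ᵥ y := by
  rw [dotProduct_mulVec, vecMul_mulVec, ← dotProduct_mulVec]

theorem sub_dotProduct_mulVec_sub {Q : Matrix n n α} (hQ : Q.IsSymm) (x y : n → α) :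
    (x - y) ⬝ᵥ Q *ᵥ (x - y) = x ⬝ᵥ Q *ᵥ x - 2 * (x ⬝ᵥ Q *ᵥ y) + y ⬝ᵥ Q *ᵥ y := by
  have hswap : y ⬝ᵥ Q *ᵥ x = x ⬝ᵥ Q *ᵥ y := by
    rw [dotProduct_mulVec, ← mulVec_transpose, hQ.eq, dotProduct_comm]
  rw [mulVec_sub, dotProduct_sub, sub_dotProduct, sub_dotProduct, hswap]
  ring

variable [DecidableEq n]

theorem transpose_mul_inv_mul_transpose_mul {A : Matrix n n α} (hA : IsUnit A.det) :
    Aᵀ * (A * Aᵀ)⁻¹ * A = 1 := by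
  rw [Matrix.mul_inv_rev, ← Matrix.mul_assoc, mul_nonsing_inv _ (by simpa using hA),
    Matrix.one_mul, nonsing_inv_mul _ hA]

theorem mul_mul_transpose_mul_of_isSymm {R Ψ : Matrix n n α} (hR : R.IsSymm)
    (hΨ : Ψᵀ * Ψ = 1) :
    R * Ψ * (R * Ψ)ᵀ = R * R := by
  rw [transpose_mul, hR.eq, Matrix.mul_assoc, ← Matrix.mul_assoc Ψ, mul_eq_one_comm.1 hΨ,
    Matrix.one_mul]

theorem transpose_mul_mul_mul_of_mul_mul_eq {R Ψ Q D : Matrix n n α} (hR : R.IsSymm)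
    (hΨ : Ψᵀ * Ψ = 1) (hQ : R * Q * R = Ψ * D * Ψᵀ) :
    (R * Ψ)ᵀ * Q * (R * Ψ) = D := by
  calc (R * Ψ)ᵀ * Q * (R * Ψ) = Ψᵀ * (R * Q * R) * Ψ := by
        rw [transpose_mul, hR.eq]; simp only [Matrix.mul_assoc]
    _ = (Ψᵀ * Ψ) * D * (Ψᵀ * Ψ) := by rw [hQ]; simp only [Matrix.mul_assoc]
    _ = D := by rw [hΨ, Matrix.one_mul, Matrix.mul_one]

end Matrix

namespace ProbabilityTheory

theorem prod_gaussianPDFReal_zero_one {ι : Type*} [Fintype ι] (x : ι → ℝ) :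
    ∏ i, gaussianPDFReal 0 1 (x i) =
      (2 * π) ^ (-(Fintype.card ι : ℝ) / 2) * exp (-(x ⬝ᵥ x) / 2) := by
  have hsqrt : (√(2 * π))⁻¹ = (2 * π) ^ (-(1 : ℝ) / 2) := by
    rw [sqrt_eq_rpow, ← rpow_neg (by positivity)]; norm_num
  simp only [gaussianPDFReal, NNReal.coe_one, mul_one, sub_zero, Finset.prod_mul_distrib,
    Finset.prod_const, Finset.card_univ, ← exp_sum, hsqrt,
    ← rpow_mul_natCast (by positivity : (0 : ℝ) ≤ 2 * π)]
  congr 2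
  · ring
  · simp [dotProduct, sq, Finset.sum_div, Finset.sum_neg_distrib, neg_div]

theorem pi_gaussianReal_eq_withDensity {ι : Type*} [Fintype ι] :
    Measure.pi (fun _ : ι ↦ gaussianReal 0 1) = volume.withDensity fun x ↦
      ENNReal.ofReal ((2 * π) ^ (-(Fintype.card ι : ℝ) / 2) * exp (-(x ⬝ᵥ x) / 2)) := by
  rw [Measure.pi_eq_withDensity (μ := fun _ ↦ volume) (fun _ ↦ measurable_gaussianPDF 0 1)
    fun _ ↦ gaussianReal_of_var_ne_zero 0 one_ne_zero, ← volume_pi]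
  simp_rw [gaussianPDF, ← ENNReal.ofReal_prod_of_nonneg fun i _ ↦ gaussianPDFReal_nonneg 0 1 _,
    prod_gaussianPDFReal_zero_one]

theorem map_sum_mul_pi_gaussianReal {ι : Type*} [Fintype ι] (T : Finset ι) (c : ι → ℝ) :
    (Measure.pi fun _ : ι ↦ gaussianReal 0 1).map (fun z ↦ ∑ i ∈ T, c i * z i) =
      gaussianReal 0 ⟨∑ i ∈ T, c i ^ 2, by positivity⟩ := by
  set P := Measure.pi fun _ : ι ↦ gaussianReal 0 1
  have hcoord (i : ι) : HasLaw (fun z : ι → ℝ ↦ z i) (gaussianReal 0 1) P :=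
    (measurePreserving_eval (fun _ : ι ↦ gaussianReal 0 1) i).hasLaw
  have hgauss : HasGaussianLaw (fun z ↦ ∑ i ∈ T, c i * z i) P := by
    have hjoint : HasGaussianLaw (fun z : ι → ℝ ↦ fun i ↦ z i) P :=
      iIndepFun.hasGaussianLaw (fun i ↦ (hcoord i).hasGaussianLaw)
        (iIndepFun_pi (X := fun _ x ↦ x) fun _ ↦ aemeasurable_id)
    have hL : (fun z : ι → ℝ ↦ ∑ i ∈ T, c i * z i) =
        fun z ↦ (∑ i ∈ T, c i • ContinuousLinearMap.proj (R := ℝ) (φ := fun _ : ι ↦ ℝ) i) z := by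
      ext; simp
    rw [hL]
    exact hjoint.map_fun _
  rw [hgauss.map_eq_gaussianReal]
  congr
  · have hcoord_int (i : ι) : Integrable (fun z : ι → ℝ ↦ z i) P :=
      integrable_eval IsGaussian.integrable_id
    rw [integral_finsetSum _ fun i _ ↦ (hcoord_int i).const_mul _]
    simp [integral_const_mul, (hcoord _).integral_eq]
  · have hindep : iIndepFun (fun i (z : ι → ℝ) ↦ c i * z i) P :=
      iIndepFun_pi (X := fun i x ↦ c i * x) fun _ ↦ by fun_prop
    rw [← Finset.sum_fn, IndepFun.variance_sum (fun i _ ↦ ?_)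
      fun i _ j _ hij ↦ hindep.indepFun hij]
    · simp only [variance_const_mul, (hcoord _).variance_eq, variance_id_gaussianReal,
        NNReal.coe_one, mul_one]
      exact Real.toNNReal_of_nonneg _
    · exact (IsGaussian.memLp_two_id.comp_measurePreserving
        (measurePreserving_eval (fun _ : ι ↦ gaussianReal 0 1) i)).const_mul _


theorem identDistrib_add_sum_compl_pi_gaussianReal {ι : Type*} [Fintype ι] [DecidableEq ι]
    (K : Finset ι) {G : (K → ℝ) → ℝ} (hG : Measurable G) (c : ι → ℝ) {σ : ℝ}
    (hσ : σ ^ 2 = ∑ j ∈ Kᶜ, c j ^ 2) :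
    IdentDistrib (fun z ↦ G (K.restrict z) + ∑ j ∈ Kᶜ, c j * z j)
      (fun p : (ι → ℝ) × ℝ ↦ G (K.restrict p.1) + σ * p.2)
      (Measure.pi fun _ ↦ gaussianReal 0 1)
      ((Measure.pi fun _ ↦ gaussianReal 0 1).prod (gaussianReal 0 1)) := by
  set P := Measure.pi fun _ : ι ↦ gaussianReal 0 1
  have hGK : Measurable fun z : ι → ℝ ↦ G (K.restrict z) :=
    hG.comp (Finset.measurable_restrict K)
  have hXY : IndepFun (fun z ↦ G (K.restrict z)) (fun z ↦ ∑ j ∈ Kᶜ, c j * z j) P := by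
    have hblocks := (iIndepFun_pi (X := fun _ x ↦ x) (μ := fun _ : ι ↦ gaussianReal 0 1)
      fun _ ↦ aemeasurable_id).indepFun_finset K Kᶜ disjoint_compl_right measurable_pi_apply
    have hL : (fun z : ι → ℝ ↦ ∑ j ∈ Kᶜ, c j * z j) =
        (fun v ↦ ∑ j : (Kᶜ : Finset ι), c j * v j) ∘ fun z (j : (Kᶜ : Finset ι)) ↦ z j := by
      ext z; exact (Finset.sum_coe_sort Kᶜ fun j ↦ c j * z j).symm
    rw [hL]
    exact hblocks.comp hG (Finset.measurable_sum _ fun j _ ↦ by fun_prop)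
  have hZW : IndepFun (fun p : (ι → ℝ) × ℝ ↦ G (K.restrict p.1)) (fun p ↦ σ * p.2)
      (P.prod (gaussianReal 0 1)) :=
    indepFun_prod hGK (measurable_const_mul σ)
  have hX : IdentDistrib (fun z ↦ G (K.restrict z)) (fun p : (ι → ℝ) × ℝ ↦ G (K.restrict p.1))
      P (P.prod (gaussianReal 0 1)) :=
    (HasLaw.id.identDistrib measurePreserving_fst.hasLaw).comp hGK
  have hY : IdentDistrib (fun z ↦ ∑ j ∈ Kᶜ, c j * z j) (fun p : (ι → ℝ) × ℝ ↦ σ * p.2)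
      P (P.prod (gaussianReal 0 1)) := by
    refine ⟨(Finset.measurable_sum _ fun j _ ↦ by fun_prop).aemeasurable, by fun_prop, ?_⟩
    rw [map_sum_mul_pi_gaussianReal,
      show (fun p : (ι → ℝ) × ℝ ↦ σ * p.2) = (σ * ·) ∘ Prod.snd from rfl,
      ← Measure.map_map (measurable_const_mul σ) measurable_snd,
      measurePreserving_snd.map_eq, gaussianReal_map_const_mul]
    congr 1
    · ring
    · rw [mul_one]; exact Subtype.ext hσ.symm
  exact (hX.prodMk hY hXY hZW).comp measurable_add

end ProbabilityTheory

theorem sum_mul_sq_add_mul_eq {ι : Type*} [Fintype ι] [DecidableEq ι] (K : Finset ι)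
    {w b ν : ι → ℝ} (hK : ∀ j, j ∈ K ↔ w j ≠ 0) (hν : ∀ j ∈ K, ν j = b j / (2 * w j))
    (z : ι → ℝ) :
    ∑ j, (w j * z j ^ 2 + b j * z j) =
      ∑ j ∈ K, w j * (z j + ν j) ^ 2 - ∑ j ∈ K, w j * ν j ^ 2 + ∑ j ∈ Kᶜ, b j * z j := by
  rw [← Finset.sum_add_sum_compl K, ← Finset.sum_sub_distrib]
  congr 1
  · refine Finset.sum_congr rfl fun j hj ↦ ?_
    have hw := (hK j).1 hj
    rw [hν j hj]
    field_simp
    ring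
  · refine Finset.sum_congr rfl fun j hj ↦ ?_
    rw [not_not.1 (mt (hK j).2 (Finset.mem_compl.1 hj))]
    ring

theorem gaussDensity_mul_transpose {m : ℕ} (A : Matrix (Fin m) (Fin m) ℝ) (M y : Fin m → ℝ) :
    gaussDensity M (A * Aᵀ) y = |A.det|⁻¹ * ((2 * π) ^ (-(m : ℝ) / 2) *
      exp (-((A⁻¹ *ᵥ (y - M)) ⬝ᵥ (A⁻¹ *ᵥ (y - M))) / 2)) := by
  have hdet : (A * Aᵀ).det ^ (-(1 : ℝ) / 2) = |A.det|⁻¹ := by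
    rw [det_mul, det_transpose, ← sq, ← sq_abs, ← rpow_natCast, ← rpow_mul (abs_nonneg _)]
    norm_num [rpow_neg_one]
  have hquad : (y - M) ⬝ᵥ (A * Aᵀ)⁻¹ *ᵥ (y - M) = (A⁻¹ *ᵥ (y - M)) ⬝ᵥ (A⁻¹ *ᵥ (y - M)) := by
    rw [Matrix.mul_inv_rev, ← transpose_nonsing_inv, ← mulVec_mulVec, dotProduct_mulVec,
      vecMul_transpose]
  rw [gaussDensity, hdet, hquad]
  ring

theorem map_mulVec_add_pi_gaussianReal {m : ℕ} {A : Matrix (Fin m) (Fin m) ℝ} (hA : A.det ≠ 0)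
    (M : Fin m → ℝ) :
    (Measure.pi fun _ ↦ gaussianReal 0 1).map (fun z ↦ A *ᵥ z + M) =
      gaussMeasure M (A * Aᵀ) := by
  have hinv : Function.LeftInverse (fun y ↦ A⁻¹ *ᵥ (y - M)) (fun z ↦ A *ᵥ z + M) := fun z ↦ by
    simp [mulVec_mulVec, nonsing_inv_mul A (Ne.isUnit hA)]
  rw [pi_gaussianReal_eq_withDensity, map_withDensity_of_leftInverse (by fun_prop) (by fun_prop)
    hinv (by fun_prop), map_mulVec_add_volume hA, withDensity_smul_measure,
    ← withDensity_smul' _ _ ENNReal.ofReal_ne_top, gaussMeasure]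
  congr with y
  rw [gaussDensity_mul_transpose, ENNReal.ofReal_mul (by positivity), Fintype.card_fin]
  rfl

theorem log_gaussDensity {m : ℕ} (M : Fin m → ℝ) {S : Matrix (Fin m) (Fin m) ℝ}
    (hS : 0 < S.det) (y : Fin m → ℝ) :
    log (gaussDensity M S y) = -(m / 2) * log (2 * π) - log S.det / 2
      - (y - M) ⬝ᵥ S⁻¹ *ᵥ (y - M) / 2 := by
  rw [gaussDensity, log_mul (by positivity) (exp_ne_zero _),
    log_mul (by positivity) (by positivity), log_rpow (by positivity), log_rpow hS, log_exp]
  ring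

theorem measurable_gaussDensity {m : ℕ} (M : Fin m → ℝ) (S : Matrix (Fin m) (Fin m) ℝ) :
    Measurable (gaussDensity M S) := by
  unfold gaussDensity; fun_prop

theorem log_gaussDensity_sub_log_gaussDensity {m : ℕ} {S0 S1 A : Matrix (Fin m) (Fin m) ℝ}
    (hS0 : S0.PosDef) (hS1 : S1.PosDef) {lam : Fin m → ℝ} (h0 : Aᵀ * S0⁻¹ * A = 1)
    (h1 : Aᵀ * S1⁻¹ * A = diagonal lam) (M0 M1 z : Fin m → ℝ) :
    log (gaussDensity M1 S1 (A *ᵥ z + M0)) - log (gaussDensity M0 S0 (A *ᵥ z + M0)) =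
      (log (S0.det / S1.det) - (M1 - M0) ⬝ᵥ S1⁻¹ *ᵥ (M1 - M0)) / 2 +
        ∑ j, ((1 - lam j) / 2 * z j ^ 2 + ((Aᵀ * S1⁻¹) *ᵥ (M1 - M0)) j * z j) := by
  have hsymm : S1⁻¹.IsSymm := (isHermitian_iff_isSymm.1 hS1.isHermitian).inv
  rw [log_gaussDensity _ hS1.det_pos, log_gaussDensity _ hS0.det_pos, add_sub_cancel_right,
    show A *ᵥ z + M0 - M1 = A *ᵥ z - (M1 - M0) by abel, sub_dotProduct_mulVec_sub hsymm,
    mulVec_dotProduct_mulVec, mulVec_dotProduct_mulVec, mulVec_dotProduct_mulVec, mulVec_mulVec,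
    mulVec_mulVec, h0, h1, log_div hS0.det_pos.ne' hS1.det_pos.ne']
  have hsum : ∑ j, ((1 - lam j) / 2 * z j ^ 2 + ((Aᵀ * S1⁻¹) *ᵥ (M1 - M0)) j * z j) =
      z ⬝ᵥ z / 2 - z ⬝ᵥ diagonal lam *ᵥ z / 2 + z ⬝ᵥ (Aᵀ * S1⁻¹) *ᵥ (M1 - M0) := by
    simp only [mulVec_diagonal, dotProduct, Finset.sum_div, ← Finset.sum_sub_distrib,
      ← Finset.sum_add_distrib]
    exact Finset.sum_congr rfl fun j _ ↦ by ring
  rw [hsum, one_mulVec]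
  ring

theorem stmt4_general {m : ℕ} (M0 M1 : Fin m → ℝ)
    (S0 S1 sqrtS0 : Matrix (Fin m) (Fin m) ℝ)
    (hS0 : S0.PosDef) (hS1 : S1.PosDef)
    (hsqrt : sqrtS0.PosDef) (hsqrt2 : sqrtS0 * sqrtS0 = S0)
    (LLR : (Fin m → ℝ) → ℝ)
    (hLLR : ∀ y, LLR y = Real.log (gaussDensity M1 S1 y) - Real.log (gaussDensity M0 S0 y))
    (D : Fin m → ℝ) (hD : D = M1 - M0)
    (Ψ0 : Matrix (Fin m) (Fin m) ℝ) (lam : Fin m → ℝ)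
    (hΨorth : Ψ0ᵀ * Ψ0 = 1)
    (hdecomp : sqrtS0 * S1⁻¹ * sqrtS0 = Ψ0 * Matrix.diagonal lam * Ψ0ᵀ)
    (w : Fin m → ℝ) (hw : ∀ j, w j = (1 - lam j) / 2)
    (b0 : Fin m → ℝ) (hb0 : b0 = (Ψ0ᵀ * sqrtS0 * S1⁻¹).mulVec D)
    (K0 : Finset (Fin m)) (hK0 : ∀ j, j ∈ K0 ↔ w j ≠ 0)
    (ν : Fin m → ℝ) (hν : ∀ j ∈ K0, ν j = b0 j / (2 * w j))
    (σ0 : ℝ) (hσ0 : σ0 ^ 2 = ∑ j ∈ K0ᶜ, (b0 j) ^ 2)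
    (C0 : ℝ)
    (hC0 : C0 = (Real.log (S0.det / S1.det) - D ⬝ᵥ S1⁻¹.mulVec D) / 2
        - ∑ j ∈ K0, w j * (ν j) ^ 2) :
    Measure.map LLR (gaussMeasure M0 S0) =
      Measure.map
        (fun z : (Fin m → ℝ) × ℝ =>
          (∑ j ∈ K0, w j * (z.1 j + ν j) ^ 2) + σ0 * z.2 + C0)
        ((Measure.pi fun _ : Fin m => gaussianReal 0 1).prod (gaussianReal 0 1)) := by
  set A := sqrtS0 * Ψ0
  have hsqrt_symm : sqrtS0.IsSymm := isHermitian_iff_isSymm.1 hsqrt.isHermitian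
  have hAAt : A * Aᵀ = S0 := hsqrt2 ▸ mul_mul_transpose_mul_of_isSymm hsqrt_symm hΨorth
  have hAdet : A.det ≠ 0 := fun h ↦ hS0.det_pos.ne' (by rw [← hAAt, det_mul, h, zero_mul])
  have h0 : Aᵀ * S0⁻¹ * A = 1 := hAAt ▸ transpose_mul_inv_mul_transpose_mul hAdet.isUnit
  have h1 : Aᵀ * S1⁻¹ * A = diagonal lam :=
    transpose_mul_mul_mul_of_mul_mul_eq hsqrt_symm hΨorth hdecomp
  set G : (K0 → ℝ) → ℝ := fun u ↦ ∑ j : K0, w j * (u j + ν j) ^ 2 + C0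
  have hpoint (z : Fin m → ℝ) :
      LLR (A *ᵥ z + M0) = G (K0.restrict z) + ∑ j ∈ K0ᶜ, b0 j * z j := by
    rw [hLLR, log_gaussDensity_sub_log_gaussDensity hS0 hS1 h0 h1, ← hD, transpose_mul,
      hsqrt_symm.eq, ← hb0]
    simp only [← hw, sum_mul_sq_add_mul_eq K0 hK0 hν, G, hC0, Finset.restrict,
      Finset.sum_coe_sort K0 fun j ↦ w j * (z j + ν j) ^ 2]
    ring
  have hLLR_meas : Measurable LLR := funext hLLR ▸
    (measurable_gaussDensity M1 S1).log.sub (measurable_gaussDensity M0 S0).log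
  rw [← hAAt, ← map_mulVec_add_pi_gaussianReal hAdet,
    Measure.map_map (f := fun z ↦ A *ᵥ z + M0) hLLR_meas (by fun_prop)]
  convert (identDistrib_add_sum_compl_pi_gaussianReal K0 (G := G) (by fun_prop) b0 hσ0).map_eq
    using 2
  · exact funext hpoint
  · ext p
    simp only [G, Finset.restrict, Finset.sum_coe_sort K0 fun j ↦ w j * (p.1 j + ν j) ^ 2]
    ring

/-- Under `H₀`, i.e. `Y ~ N(M₀,S₀)`, the log-likelihood ratio
`LLR(Y) = log f₁(Y) − log f₀(Y)` has the same distribution as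
`Σ_{j ∈ K₀} w_j (Z_j + ν_j)² + σ₀ Z' + C₀` where `Z'` and the `Z_j` are independent
standard normal random variables, with `D = M₁−M₀`,
`Φ₀ = S₀^{1/2}S₁⁻¹S₀^{1/2} = Ψ₀ Λ Ψ₀ᵀ`, `w_j = (1−λ_j)/2`, `b₀ = Ψ₀ᵀS₀^{1/2}S₁⁻¹D`,
`K₀ = {j : w_j ≠ 0}`, `ν_j = b₀ⱼ/(2w_j)`, `σ₀² = Σ_{j∉K₀} b₀ⱼ²`, and
`C₀ = (log(det S₀/det S₁) − DᵀS₁⁻¹D)/2 − Σ_{j∈K₀} w_j ν_j²`. -/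
theorem stmt4 {m : ℕ} (M0 M1 : Fin m → ℝ)
    (S0 S1 sqrtS0 : Matrix (Fin m) (Fin m) ℝ)
    (hS0 : S0.PosDef) (hS1 : S1.PosDef)
    (hsqrt : sqrtS0.PosDef) (hsqrt2 : sqrtS0 * sqrtS0 = S0)
    (LLR : (Fin m → ℝ) → ℝ)
    (hLLR : ∀ y, LLR y = Real.log (gaussDensity M1 S1 y) - Real.log (gaussDensity M0 S0 y))
    (D : Fin m → ℝ) (hD : D = M1 - M0)
    (Ψ0 : Matrix (Fin m) (Fin m) ℝ) (lam : Fin m → ℝ)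
    (hΨorth : Ψ0ᵀ * Ψ0 = 1)
    (hdecomp : sqrtS0 * S1⁻¹ * sqrtS0 = Ψ0 * Matrix.diagonal lam * Ψ0ᵀ)
    (w : Fin m → ℝ) (hw : ∀ j, w j = (1 - lam j) / 2)
    (b0 : Fin m → ℝ) (hb0 : b0 = (Ψ0ᵀ * sqrtS0 * S1⁻¹).mulVec D)
    (K0 : Finset (Fin m)) (hK0 : ∀ j, j ∈ K0 ↔ w j ≠ 0)
    (ν : Fin m → ℝ) (hν : ∀ j ∈ K0, ν j = b0 j / (2 * w j))
    (σ0 : ℝ) (hσ0nn : 0 ≤ σ0) (hσ0 : σ0 ^ 2 = ∑ j ∈ K0ᶜ, (b0 j) ^ 2)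
    (C0 : ℝ)
    (hC0 : C0 = (Real.log (S0.det / S1.det) - D ⬝ᵥ S1⁻¹.mulVec D) / 2
        - ∑ j ∈ K0, w j * (ν j) ^ 2) :
    Measure.map LLR (gaussMeasure M0 S0) =
      Measure.map
        (fun z : (Fin m → ℝ) × ℝ =>
          (∑ j ∈ K0, w j * (z.1 j + ν j) ^ 2) + σ0 * z.2 + C0)
        ((Measure.pi fun _ : Fin m => gaussianReal 0 1).prod (gaussianReal 0 1)) :=
  stmt4_general M0 M1 S0 S1 sqrtS0 hS0 hS1 hsqrt hsqrt2 LLR hLLR D hD Ψ0 lam hΨorth hdecomp w hw b0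
    hb0 K0 hK0 ν hν σ0 hσ0 C0 hC0

end
end

section
/- Let μ₀ and μ₁ be distinct probability measures on ℝ^m, both absolutely continuous with respect to Lebesgue measure. Then for every a ∈ (0,1) there exists a measurable set R ⊆ ℝ^m with μ₀(R) = a and μ₁(R) > a. -/
/-!
Write `μ₀ = g₀ ν` and `μ₁ = g₁ ν` with `ν = μ₀ + μ₁`, and split the space into `B = {g₀ < g₁}`,
`E = {g₀ = g₁}` and `D = {g₁ < g₀}`. On every subset of `B` of positive `μ₀`-mass `μ₁` is strictly
larger than `μ₀`, on subsets of `E` they agree, and on subsets of `D` of positive mass `μ₀` is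
strictly larger; moreover `μ₀ B < μ₁ B`, since otherwise `g₁ ≤ g₀` a.e. and equal total masses
force `μ₀ = μ₁`. Because `μ₀` charges no hyperplane `{x | x i = t}`, cutting a measurable set by the
half-spaces `{x | x i ≤ t}` produces subsets of every intermediate `μ₀`-mass (intermediate value
theorem). Hence `R` can be taken inside `B` if `a ≤ μ₀ B`, as the complement of a subset of `D` of
`μ₀`-mass `1 - a` if `μ₀ (B ∪ E) < a`, and as `B` together with a piece of `E` otherwise.
-/

open MeasureTheory Filter Set Topology ENNReal

theorem continuous_measureReal_Iic (ν : Measure ℝ) [IsFiniteMeasure ν] [NullSingletonClass ν] :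
    Continuous fun t => ν.real (Iic t) := by
  refine continuous_iff_continuousAt.2 fun x => ?_
  have hIcc : Tendsto (fun t => ν.real (Icc (x - |t - x|) (x + |t - x|))) (𝓝 x) (𝓝 0) := by
    have hδ : Tendsto (fun t => |t - x|) (𝓝 x) (𝓝 0) := by
      simpa using (continuous_sub_right x).abs.tendsto x
    exact (ENNReal.tendsto_toReal zero_ne_top).comp ((tendsto_measure_Icc ν x).comp hδ)
  have hIoc : ∀ {a b : ℝ}, a ≤ b → |ν.real (Iic b) - ν.real (Iic a)| ≤ ν.real (Ioc a b) := by
    intro a b hab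
    rw [abs_of_nonneg (sub_nonneg.2 (measureReal_mono (Iic_subset_Iic.2 hab))),
      sub_le_iff_le_add', ← Iic_union_Ioc_eq_Iic hab]
    exact measureReal_union_le _ _
  rw [ContinuousAt, tendsto_iff_norm_sub_tendsto_zero]
  refine squeeze_zero (fun _ => norm_nonneg _) (fun t => ?_) hIcc
  rw [Real.norm_eq_abs]
  rcases le_total t x with h | h
  · rw [abs_sub_comm]
    refine (hIoc h).trans (measureReal_mono (Ioc_subset_Icc_self.trans (Icc_subset_Icc ?_ ?_))) <;>
      cases abs_cases (t - x) <;> linarith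
  · refine (hIoc h).trans (measureReal_mono (Ioc_subset_Icc_self.trans (Icc_subset_Icc ?_ ?_))) <;>
      cases abs_cases (t - x) <;> linarith

theorem exists_measure_Iic_eq (ν : Measure ℝ) [IsFiniteMeasure ν] [NullSingletonClass ν]
    {c : ℝ≥0∞} (hc0 : 0 < c) (hc : c < ν univ) : ∃ t, ν (Iic t) = c := by
  have hcont : Continuous fun t => ν (Iic t) :=
    (ENNReal.continuous_ofReal.comp (continuous_measureReal_Iic ν)).congr
      fun _ => ofReal_measureReal
  have hbot : Tendsto (fun t => ν (Iic t)) atBot (𝓝 0) := by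
    have hempty : ⋂ t : ℝ, Iic t = ∅ := iInter_Iic_eq_empty_iff.2 (by simp)
    simpa [Function.comp_def, hempty] using tendsto_measure_iInter_atBot (μ := ν)
      (fun t => measurableSet_Iic.nullMeasurableSet) (fun _ _ => Iic_subset_Iic.2)
      ⟨0, measure_ne_top ν _⟩
  obtain ⟨a, ha⟩ := (hbot.eventually (gt_mem_nhds hc0)).exists
  obtain ⟨b, hb⟩ := ((tendsto_measure_Iic_atTop ν).eventually (lt_mem_nhds hc)).exists
  exact mem_range_of_exists_le_of_exists_ge hcont ⟨a, ha.le⟩ ⟨b, hb.le⟩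

theorem exists_subset_measure_eq {α : Type*} [MeasurableSpace α] {μ : Measure α}
    [IsFiniteMeasure μ] {p : α → ℝ} (hp : Measurable p) (hp0 : ∀ t, μ (p ⁻¹' {t}) = 0)
    {S : Set α} (hS : MeasurableSet S) {c : ℝ≥0∞} (hc0 : 0 < c) (hc : c ≤ μ S) :
    ∃ T ⊆ S, MeasurableSet T ∧ μ T = c := by
  rcases hc.lt_or_eq with hc | rfl
  · set ν := (μ.restrict S).map p
    have hν : ∀ {s}, MeasurableSet s → ν s = μ (S ∩ p ⁻¹' s) := fun hs => by
      rw [Measure.map_apply hp hs, Measure.restrict_apply' hS, inter_comm]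
    have : NullSingletonClass ν := ⟨fun t => by
      rw [hν (measurableSet_singleton t)]
      exact measure_mono_null inter_subset_right (hp0 t)⟩
    obtain ⟨t, ht⟩ := exists_measure_Iic_eq ν hc0
      (by rwa [hν MeasurableSet.univ, preimage_univ, inter_univ])
    exact ⟨S ∩ p ⁻¹' Iic t, inter_subset_left, hS.inter (hp measurableSet_Iic),
      by rw [← ht, hν measurableSet_Iic]⟩
  · exact ⟨S, subset_rfl, hS, rfl⟩

theorem prob_compl_lt_prob_compl {α : Type*} [MeasurableSpace α] {μ₀ μ₁ : Measure α}
    [IsProbabilityMeasure μ₀] [IsProbabilityMeasure μ₁] {U : Set α} (hU : MeasurableSet U)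
    (h : μ₁ U < μ₀ U) : μ₀ Uᶜ < μ₁ Uᶜ := by
  rw [prob_compl_eq_one_sub hU, prob_compl_eq_one_sub hU]
  exact (ENNReal.cancel_of_ne one_ne_top).tsub_lt_tsub_iff_left_of_le
    (ENNReal.cancel_of_ne (measure_ne_top _ _)) prob_le_one |>.2 h

theorem eq_of_subsingleton_of_isProbabilityMeasure {α : Type*} [MeasurableSpace α]
    [Subsingleton α] (μ₀ μ₁ : Measure α) [IsProbabilityMeasure μ₀] [IsProbabilityMeasure μ₁] :
    μ₀ = μ₁ := by
  ext s
  rcases s.eq_empty_or_nonempty with rfl | hs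
  · simp
  · rw [Subsingleton.eq_univ_of_nonempty hs, measure_univ, measure_univ]

section withDensity

variable {α : Type*} [MeasurableSpace α] {ν : Measure α} {g₀ g₁ : α → ℝ≥0∞} {S : Set α}

theorem withDensity_lt_withDensity_of_subset_setOf_lt (hg₁ : Measurable g₁)
    (hS : MeasurableSet S) (hSsub : S ⊆ {x | g₀ x < g₁ x}) (hνS : ν S ≠ 0)
    (hS_top : ν.withDensity g₀ S ≠ ∞) : ν.withDensity g₀ S < ν.withDensity g₁ S := by
  rw [withDensity_apply _ hS] at hS_top ⊢
  rw [withDensity_apply _ hS]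
  exact setLIntegral_strict_mono hS hνS hg₁ hS_top (ae_of_all _ hSsub)

theorem withDensity_eq_withDensity_of_subset_setOf_eq (hS : MeasurableSet S)
    (hSsub : S ⊆ {x | g₀ x = g₁ x}) : ν.withDensity g₀ S = ν.withDensity g₁ S := by
  rw [withDensity_apply _ hS, withDensity_apply _ hS]
  exact setLIntegral_congr_fun hS hSsub

theorem withDensity_setOf_lt_lt_withDensity_setOf_lt (hg₀ : Measurable g₀)
    (hg₁ : Measurable g₁) [IsFiniteMeasure (ν.withDensity g₀)]
    [IsFiniteMeasure (ν.withDensity g₁)] (huniv : ν.withDensity g₀ univ = ν.withDensity g₁ univ)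
    (hne : ν.withDensity g₀ ≠ ν.withDensity g₁) :
    ν.withDensity g₀ {x | g₀ x < g₁ x} < ν.withDensity g₁ {x | g₀ x < g₁ x} := by
  by_contra! hle
  have hnull : ν {x | g₀ x < g₁ x} = 0 := by
    by_contra hpos
    exact hle.not_gt (withDensity_lt_withDensity_of_subset_setOf_lt hg₁
      (measurableSet_lt hg₀ hg₁) subset_rfl hpos (measure_ne_top _ _))
  have hae : g₁ ≤ᵐ[ν] g₀ := ae_iff.2 (by simpa only [not_le] using hnull)
  have hlint : ∀ g, ∫⁻ x, g x ∂ν = ν.withDensity g univ := fun g => by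
    rw [withDensity_apply _ .univ, setLIntegral_univ]
  exact hne (withDensity_congr_ae (ae_eq_of_ae_le_of_lintegral_le hae
    (by rw [hlint]; exact measure_ne_top _ _) hg₀.aemeasurable (by rw [hlint, hlint, huniv])).symm)

theorem exists_withDensity_eq_lt_withDensity_of_ne (hg₀ : Measurable g₀)
    (hg₁ : Measurable g₁) [IsProbabilityMeasure (ν.withDensity g₀)]
    [IsProbabilityMeasure (ν.withDensity g₁)] (hne : ν.withDensity g₀ ≠ ν.withDensity g₁)
    {p : α → ℝ} (hp : Measurable p) (hp0 : ∀ t, ν.withDensity g₀ (p ⁻¹' {t}) = 0)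
    {A : ℝ≥0∞} (hA0 : 0 < A) (hA1 : A < 1) :
    ∃ R, MeasurableSet R ∧ ν.withDensity g₀ R = A ∧ A < ν.withDensity g₁ R := by
  set μ₀ := ν.withDensity g₀
  set μ₁ := ν.withDensity g₁
  have hνS : ∀ {S}, μ₀ S ≠ 0 → ν S ≠ 0 := fun h hν => h (withDensity_absolutelyContinuous ν g₀ hν)
  set B := {x | g₀ x < g₁ x}
  set E := {x | g₀ x = g₁ x}
  have hB : MeasurableSet B := measurableSet_lt hg₀ hg₁
  have hE : MeasurableSet E := measurableSet_eq_fun hg₀ hg₁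
  have hBE : Disjoint B E := disjoint_left.2 fun _ hxB hxE => hxB.ne hxE
  have hD : (B ∪ E)ᶜ ⊆ {x | g₁ x < g₀ x} := fun x hx => by
    simp only [mem_compl_iff, mem_union, not_or, B, E, mem_ofPred_eq, not_lt] at hx
    exact lt_of_le_of_ne hx.1 (Ne.symm hx.2)
  rcases le_or_gt A (μ₀ B) with hAB | hBA
  · obtain ⟨S, hSB, hS, hSA⟩ := exists_subset_measure_eq hp hp0 hB hA0 hAB
    exact ⟨S, hS, hSA, hSA ▸ withDensity_lt_withDensity_of_subset_setOf_lt hg₁ hS hSB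
      (hνS (hSA ▸ hA0.ne')) (measure_ne_top _ _)⟩
  rcases lt_or_ge (μ₀ (B ∪ E)) A with hBEA | hABE
  · have hUc : 1 - A ≤ μ₀ (B ∪ E)ᶜ := by
      rw [prob_compl_eq_one_sub (hB.union hE)]
      exact tsub_le_tsub_left hBEA.le 1
    obtain ⟨U, hUD, hU, hUA⟩ :=
      exists_subset_measure_eq hp hp0 (hB.union hE).compl (tsub_pos_of_lt hA1) hUc
    have hUcA : μ₀ Uᶜ = A := by
      rw [prob_compl_eq_one_sub hU, hUA, ENNReal.sub_sub_cancel one_ne_top hA1.le]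
    exact ⟨Uᶜ, hU.compl, hUcA, hUcA ▸ prob_compl_lt_prob_compl hU
      (withDensity_lt_withDensity_of_subset_setOf_lt hg₀ hU (hUD.trans hD)
        (hνS (hUA ▸ (tsub_pos_of_lt hA1).ne')) (measure_ne_top _ _))⟩
  · have hTE : A - μ₀ B ≤ μ₀ E := by
      rw [measure_union hBE hE] at hABE
      exact tsub_le_iff_left.2 hABE
    obtain ⟨T, hTE, hT, hTA⟩ := exists_subset_measure_eq hp hp0 hE (tsub_pos_of_lt hBA) hTE
    have hBT : Disjoint B T := hBE.mono_right hTE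
    have hBTA : μ₀ B + μ₀ T = A := by rw [hTA, add_tsub_cancel_of_le hBA.le]
    refine ⟨B ∪ T, hB.union hT, by rw [measure_union hBT hT, hBTA], ?_⟩
    calc A = μ₀ B + μ₀ T := hBTA.symm
      _ < μ₁ B + μ₀ T := ENNReal.add_lt_add_right (measure_ne_top _ _)
          (withDensity_setOf_lt_lt_withDensity_setOf_lt hg₀ hg₁
            (by rw [measure_univ, measure_univ]) hne)
      _ = μ₁ (B ∪ T) := by
          rw [measure_union hBT hT, withDensity_eq_withDensity_of_subset_setOf_eq hT hTE]

end withDensity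

theorem exists_measure_eq_lt_measure_of_ne {α : Type*} [MeasurableSpace α]
    {μ₀ μ₁ : Measure α} [IsProbabilityMeasure μ₀] [IsProbabilityMeasure μ₁] (hne : μ₀ ≠ μ₁)
    {p : α → ℝ} (hp : Measurable p) (hp0 : ∀ t, μ₀ (p ⁻¹' {t}) = 0)
    {A : ℝ≥0∞} (hA0 : 0 < A) (hA1 : A < 1) :
    ∃ R, MeasurableSet R ∧ μ₀ R = A ∧ A < μ₁ R := by
  obtain ⟨ν, g₀, g₁, hg₀, hg₁, rfl, rfl⟩ : ∃ (ν : Measure α) (g₀ g₁ : α → ℝ≥0∞),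
      Measurable g₀ ∧ Measurable g₁ ∧ ν.withDensity g₀ = μ₀ ∧ ν.withDensity g₁ = μ₁ :=
    ⟨μ₀ + μ₁, _, _, Measure.measurable_rnDeriv _ _, Measure.measurable_rnDeriv _ _,
      Measure.withDensity_rnDeriv_eq _ _ (.add_right .rfl _),
      Measure.withDensity_rnDeriv_eq _ _ (.add_right' .rfl _)⟩
  exact exists_withDensity_eq_lt_withDensity_of_ne hg₀ hg₁ hne hp hp0 hA0 hA1

theorem stmt8_general {m : ℕ} (μ0 μ1 : Measure (Fin m → ℝ))
    [IsProbabilityMeasure μ0] [IsProbabilityMeasure μ1]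
    (f0 : (Fin m → ℝ) → ℝ)
    (hμ0 : μ0 = volume.withDensity fun y => ENNReal.ofReal (f0 y))
    (hne : μ0 ≠ μ1)
    (a : ℝ) (ha : a ∈ Set.Ioo (0 : ℝ) 1) :
    ∃ R : Set (Fin m → ℝ), MeasurableSet R ∧
      μ0 R = ENNReal.ofReal a ∧ ENNReal.ofReal a < μ1 R := by
  rcases Nat.eq_zero_or_pos m with rfl | hm
  · exact absurd (eq_of_subsingleton_of_isProbabilityMeasure μ0 μ1) hne
  have hnull : ∀ t, μ0 ((fun x => x ⟨0, hm⟩) ⁻¹' {t}) = 0 := fun t =>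
    (hμ0 ▸ withDensity_absolutelyContinuous _ _) (by
      rw [volume_pi]; exact Measure.pi_hyperplane (fun _ : Fin m => (volume : Measure ℝ)) _ t)
  exact exists_measure_eq_lt_measure_of_ne hne (measurable_pi_apply _) hnull
    (ENNReal.ofReal_pos.2 ha.1) (ENNReal.ofReal_lt_one.2 ha.2)

/-- If `μ₀ ≠ μ₁` are probability measures on `ℝ^m` admitting densities with
respect to Lebesgue measure, then for every `a ∈ (0,1)` there is a measurable set `R`
with `μ₀(R) = a` and `μ₁(R) > a`. -/
theorem stmt8 {m : ℕ} (μ0 μ1 : Measure (Fin m → ℝ))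
    [IsProbabilityMeasure μ0] [IsProbabilityMeasure μ1]
    (f0 f1 : (Fin m → ℝ) → ℝ)
    (hμ0 : μ0 = volume.withDensity fun y => ENNReal.ofReal (f0 y))
    (hμ1 : μ1 = volume.withDensity fun y => ENNReal.ofReal (f1 y))
    (hne : μ0 ≠ μ1)
    (a : ℝ) (ha : a ∈ Set.Ioo (0 : ℝ) 1) :
    ∃ R : Set (Fin m → ℝ), MeasurableSet R ∧
      μ0 R = ENNReal.ofReal a ∧ ENNReal.ofReal a < μ1 R :=
  stmt8_general μ0 μ1 f0 hμ0 hne a ha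
end
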